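/- arXiv:math/0112285 — 2 statements merged into one kernel-verified Lean document; each statement's English description precedes it below -/
import Mathlib

section
/- With the same setup: if a multiset S of points (x,y) with 1 ≤ x ≤ d and d+1 ≤ y ≤ n satisfies the chain condition (for each q, every chain of points of S in R(E_q) has at most d − κ_q − q elements), then S, viewed as a multiset of transpositions, satisfies (S1): for every chain s_1 > s_2 > … > s_t of pairwise commuting transpositions from S, w ≥ τ s_1 ⋯ s_t in the induced Bruhat order on S_n/(S_d × S_{n-d}). -/
/-- Apply a list of transpositions `(x,y)` (as functions on positions in `ℕ`) to `x`. -/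
def applySwaps (L : List (ℕ × ℕ)) (x : ℕ) : ℕ :=
  L.foldr (fun s y => if y = s.1 then s.2 else if y = s.2 then s.1 else y) x

/-- The increasingly sorted list of values `f(1),…,f(d)`. -/
def sortedFirstVals (d : ℕ) (f : ℕ → ℕ) : List ℕ :=
  ((Finset.Icc 1 d).image f).sort (· ≤ ·)

/-- `w ≥ π` in the induced Bruhat order on `S_n/(S_d × S_{n-d})`: the sorted vector
of the first `d` values of `π` is componentwise `≤ (i₁,…,i_d)`, where `w ↔ i`. -/
def DominatedByW (d : ℕ) (f i : ℕ → ℕ) : Prop :=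
  ∀ k, k < d → (sortedFirstVals d f).getD k 0 ≤ i (k + 1)

/-- Property (S1) for a multiset `S` of reflections: for every chain
`s₁ > s₂ > … > s_t` of pairwise commuting reflections from `S` (strictly increasing
first coordinates and strictly decreasing second coordinates), one has
`w ≥ τ·s₁⋯s_t` in the induced Bruhat order. -/
def S1Prop (d : ℕ) (τ i : ℕ → ℕ) (S : Multiset (ℕ × ℕ)) : Prop :=
  ∀ L : List (ℕ × ℕ), (∀ s ∈ L, s ∈ S) →
    L.Pairwise (fun a b => a.1 < b.1 ∧ b.2 < a.2) →
    DominatedByW d (fun x => τ (applySwaps L x)) i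

/-- A chain of points in `ℕ × ℕ`. -/
def IsPtChainN (C : Finset (ℕ × ℕ)) : Prop :=
  ∀ p ∈ C, ∀ r ∈ C, p ≠ r → (p.1 < r.1 ∧ r.2 < p.2) ∨ (r.1 < p.1 ∧ p.2 < r.2)

lemma applySwaps_cons (s : ℕ × ℕ) (T : List (ℕ × ℕ)) (x : ℕ) :
    applySwaps (s :: T) x =
      (if applySwaps T x = s.1 then s.2 else if applySwaps T x = s.2 then s.1
        else applySwaps T x) := rfl

lemma applySwaps_fix {L : List (ℕ × ℕ)} {x : ℕ}
    (h : ∀ s ∈ L, x ≠ s.1 ∧ x ≠ s.2) : applySwaps L x = x := by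
  induction L with
  | nil => rfl
  | cons s T ih =>
    have h1 := h s List.mem_cons_self
    have h2 : applySwaps T x = x := ih (fun t ht => h t (List.mem_cons_of_mem _ ht))
    rw [applySwaps_cons, h2, if_neg h1.1, if_neg h1.2]

lemma applySwaps_eq_snd {L : List (ℕ × ℕ)}
    (hpw : L.Pairwise fun a b => a.1 ≠ b.1 ∧ a.1 ≠ b.2 ∧ a.2 ≠ b.1 ∧ a.2 ≠ b.2)
    {s : ℕ × ℕ} (hs : s ∈ L) : applySwaps L s.1 = s.2 := by
  induction L with
  | nil => simp at hs
  | cons t T ih =>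
    rw [List.pairwise_cons] at hpw
    rcases List.mem_cons.1 hs with rfl | hsT
    · have : applySwaps T s.1 = s.1 :=
        applySwaps_fix (fun u hu => ⟨(hpw.1 u hu).1, (hpw.1 u hu).2.1⟩)
      rw [applySwaps_cons, this, if_pos rfl]
    · have h2 := ih hpw.2 hsT
      have h3 := hpw.1 s hsT
      rw [applySwaps_cons, h2, if_neg (Ne.symm h3.2.1), if_neg (Ne.symm h3.2.2.2)]

lemma sorted_get_le (c : ℕ) : ∀ (l : List ℕ), l.Pairwise (· ≤ ·) → ∀ k, k < l.length →
    k + 1 ≤ (l.filter (fun x => x ≤ c)).length → l.getD k 0 ≤ c := by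
  intro l
  induction l with
  | nil => intro _ k hk; simp at hk
  | cons a t ih =>
    intro hs k hk hcount
    rcases Nat.eq_zero_or_pos k with rfl | hkpos
    · have hex : ∃ x ∈ a :: t, x ≤ c := by
        by_contra hno
        push_neg at hno
        have : (a :: t).filter (fun x => x ≤ c) = [] := by
          apply List.filter_eq_nil_iff.2
          intro x hx
          simpa using hno x hx
        rw [this] at hcount
        simp at hcount
      obtain ⟨x, hx, hxc⟩ := hex
      have hax : a ≤ x := by
        rcases List.mem_cons.1 hx with rfl | hxt
        · exact le_refl _
        · exact (List.pairwise_cons.1 hs).1 x hxt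
      simpa using hax.trans hxc
    · obtain ⟨k', rfl⟩ := Nat.exists_eq_succ_of_ne_zero (Nat.pos_iff_ne_zero.1 hkpos)
      have hlen : k' < t.length := by simpa using hk
      have hcount' : k' + 1 ≤ (t.filter (fun x => x ≤ c)).length := by
        have hstep : ((a :: t).filter (fun x => x ≤ c)).length ≤ (t.filter (fun x => x ≤ c)).length + 1 := by
          rw [List.filter_cons]; split <;> simp
        omega
      have := ih (List.pairwise_cons.1 hs).2 k' hlen hcount'
      simpa using this

/-- If a multiset of points `(x,y)` with `1 ≤ x ≤ d`, `d+1 ≤ y ≤ n` satisfies the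
chain condition, then, viewed as a multiset of transpositions, it satisfies (S1). -/
theorem chain_condition_implies_S1 (n d : ℕ) (hd : 1 ≤ d) (hdn : d ≤ n)
    (τ i : ℕ → ℕ)
    (hbij : Set.BijOn τ (Set.Icc 1 n) (Set.Icc 1 n))
    (hmono1 : StrictMonoOn τ (Set.Icc 1 d))
    (hmono2 : StrictMonoOn τ (Set.Icc (d + 1) n))
    (hi : StrictMonoOn i (Set.Icc 1 d))
    (hiN : ∀ ℓ ∈ Set.Icc 1 d, i ℓ ∈ Set.Icc 1 n)
    (hle : ∀ ℓ ∈ Set.Icc 1 d, τ ℓ ≤ i ℓ)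
    (κ : ℕ → ℕ)
    (hκ : ∀ q, κ q = ((Finset.Icc 1 d).filter (fun ℓ => i q < τ ℓ)).card)
    (S : Multiset (ℕ × ℕ))
    (hSrefl : ∀ s ∈ S, 1 ≤ s.1 ∧ s.1 ≤ d ∧ d + 1 ≤ s.2 ∧ s.2 ≤ n)
    (hchain : ∀ q ∈ Set.Icc 1 d, ∀ C : Finset (ℕ × ℕ),
      (∀ p ∈ C, p ∈ S) → IsPtChainN C →
      (∀ p ∈ C, (p.1 : ℤ) ≤ (d : ℤ) - κ q ∧ (κ q : ℤ) + i q < (p.2 : ℤ)) →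
      (C.card : ℤ) ≤ (d : ℤ) - κ q - q) :
    S1Prop d τ i S := by
  intro L hL hpw k hkd
  set q := k + 1 with hqdef
  have hq1 : 1 ≤ q := by omega
  have hqd : q ≤ d := by omega
  set c := i q with hcdef
  have hc1 : 1 ≤ c := (hiN q ⟨hq1, hqd⟩).1
  have hcn : c ≤ n := (hiN q ⟨hq1, hqd⟩).2
  set f := fun x => τ (applySwaps L x) with hfdef
  -- basic facts about elements of L
  have hLS : ∀ s ∈ L, 1 ≤ s.1 ∧ s.1 ≤ d ∧ d + 1 ≤ s.2 ∧ s.2 ≤ n :=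
    fun s hs => hSrefl s (hL s hs)
  have hpw2 : L.Pairwise fun a b => a.1 ≠ b.1 ∧ a.1 ≠ b.2 ∧ a.2 ≠ b.1 ∧ a.2 ≠ b.2 := by
    refine List.Pairwise.imp_of_mem ?_ hpw
    intro a b ha hb hab
    have h1 := hLS a ha; have h2 := hLS b hb
    exact ⟨by omega, by omega, by omega, by omega⟩
  have hforall : ∀ s ∈ L, ∀ t ∈ L, s ≠ t → s.1 ≠ t.1 ∧ s.2 ≠ t.2 := by
    have h2 : L.Pairwise fun a b => a.1 ≠ b.1 ∧ a.2 ≠ b.2 :=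
      hpw2.imp (fun h => ⟨h.1, h.2.2.2⟩)
    exact fun s hs t ht hst =>
      haveI : Std.Symm (fun a b : ℕ × ℕ => a.1 ≠ b.1 ∧ a.2 ≠ b.2) := ⟨fun a b h => ⟨h.1.symm, h.2.symm⟩⟩
      List.Pairwise.forall h2 hs ht hst
  have hchainOr : ∀ s ∈ L, ∀ t ∈ L, s ≠ t →
      (s.1 < t.1 ∧ t.2 < s.2) ∨ (t.1 < s.1 ∧ s.2 < t.2) := by
    have h2 : L.Pairwise fun a b =>
        (a.1 < b.1 ∧ b.2 < a.2) ∨ (b.1 < a.1 ∧ a.2 < b.2) := hpw.imp Or.inl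
    exact fun s hs t ht hst =>
      haveI : Std.Symm (fun a b : ℕ × ℕ => (a.1 < b.1 ∧ b.2 < a.2) ∨ (b.1 < a.1 ∧ a.2 < b.2)) :=
        ⟨fun a b h => h.elim Or.inr Or.inl⟩
      List.Pairwise.forall h2 hs ht hst
  have hg_mem : ∀ s ∈ L, applySwaps L s.1 = s.2 := fun s hs => applySwaps_eq_snd hpw2 hs
  have hg_fix : ∀ x : ℕ, x ≤ d → (∀ s ∈ L, x ≠ s.1) → applySwaps L x = x := by
    intro x hxd hxA
    exact applySwaps_fix (fun s hs => ⟨hxA s hs, by have := hLS s hs; omega⟩)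
  -- the finsets
  set P := L.toFinset with hPdef
  have hPmem : ∀ s, s ∈ P ↔ s ∈ L := fun s => List.mem_toFinset
  set Afin := P.image Prod.fst with hAdef
  have hmemA : ∀ x, x ∈ Afin ↔ ∃ s ∈ L, s.1 = x := by
    intro x; simp [hAdef, hPmem]
  have hfA : ∀ x, x ≤ d → x ∉ Afin → f x = τ x := by
    intro x hxd hxA
    have : applySwaps L x = x := by
      apply hg_fix x hxd
      intro s hs hxs
      exact hxA ((hmemA x).2 ⟨s, hs, hxs.symm⟩)
    simp [hfdef, this]
  have hfs : ∀ s ∈ L, f s.1 = τ s.2 := by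
    intro s hs; simp [hfdef, hg_mem s hs]
  -- injectivity of f on Icc 1 d
  have hinj : Set.InjOn f (Finset.Icc 1 d) := by
    intro x hx y hy hxy
    rw [Finset.coe_Icc, Set.mem_Icc] at hx hy
    have hτinj := hbij.injOn
    by_cases hxA : x ∈ Afin <;> by_cases hyA : y ∈ Afin
    · obtain ⟨s, hsL, hsx⟩ := (hmemA x).1 hxA
      obtain ⟨t, htL, hty⟩ := (hmemA y).1 hyA
      have h1 := hLS s hsL; have h2 := hLS t htL
      have e1 : f x = τ s.2 := hsx ▸ hfs s hsL
      have e2 : f y = τ t.2 := hty ▸ hfs t htL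
      have : s.2 = t.2 := by
        apply hτinj (Set.mem_Icc.2 ⟨by omega, by omega⟩) (Set.mem_Icc.2 ⟨by omega, by omega⟩)
        rw [← e1, ← e2, hxy]
      by_contra hne
      have hst : s ≠ t := by
        intro h
        subst h
        omega
      exact (hforall s hsL t htL hst).2 this
    · obtain ⟨s, hsL, hsx⟩ := (hmemA x).1 hxA
      have h1 := hLS s hsL
      have e1 : f x = τ s.2 := hsx ▸ hfs s hsL
      have e2 : f y = τ y := hfA y hy.2 hyA
      have : s.2 = y := by
        apply hτinj (Set.mem_Icc.2 ⟨by omega, by omega⟩) (Set.mem_Icc.2 ⟨by omega, by omega⟩)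
        rw [← e1, ← e2, hxy]
      omega
    · obtain ⟨t, htL, hty⟩ := (hmemA y).1 hyA
      have h2 := hLS t htL
      have e1 : f x = τ x := hfA x hx.2 hxA
      have e2 : f y = τ t.2 := hty ▸ hfs t htL
      have : x = t.2 := by
        apply hτinj (Set.mem_Icc.2 ⟨by omega, by omega⟩) (Set.mem_Icc.2 ⟨by omega, by omega⟩)
        rw [← e1, ← e2, hxy]
      omega
    · have e1 : f x = τ x := hfA x hx.2 hxA
      have e2 : f y = τ y := hfA y hy.2 hyA
      exact hτinj (Set.mem_Icc.2 ⟨by omega, by omega⟩) (Set.mem_Icc.2 ⟨by omega, by omega⟩)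
        (by rw [← e1, ← e2, hxy])
  set V := (Finset.Icc 1 d).image f with hVdef
  have hVcard : V.card = d := by
    rw [hVdef, Finset.card_image_of_injOn hinj, Nat.card_Icc]; omega
  -- the key counting
  set F := (Finset.Icc 1 d).filter (fun ℓ => c < τ ℓ) with hFdef
  have hκF : κ q = F.card := hκ q
  have hκd : κ q ≤ d := by
    rw [hκF]
    calc F.card ≤ (Finset.Icc 1 d).card := Finset.card_le_card (Finset.filter_subset _ _)
    _ = d := by rw [Nat.card_Icc]; omega
  -- alpha: region first coordinate
  have halpha : ∀ x, 1 ≤ x → x ≤ d → τ x ≤ c → x + κ q ≤ d := by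
    intro x h1 h2 h3
    have hsub : F ⊆ Finset.Icc (x + 1) d := by
      intro y hy
      rw [hFdef, Finset.mem_filter, Finset.mem_Icc] at hy
      rw [Finset.mem_Icc]
      refine ⟨?_, hy.1.2⟩
      by_contra hyx
      push_neg at hyx
      have : τ y ≤ τ x := hmono1.monotoneOn (Set.mem_Icc.2 ⟨hy.1.1, hy.1.2⟩)
        (Set.mem_Icc.2 ⟨h1, h2⟩) (by omega)
      omega
    have := Finset.card_le_card hsub
    rw [Nat.card_Icc] at this
    omega
  -- beta: region second coordinate
  have hbeta : ∀ y, d + 1 ≤ y → y ≤ n → c < τ y → κ q + c < y := by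
    intro y hy1 hy2 hy3
    set G := (Finset.Icc 1 n).filter (fun z => τ z ≤ c) with hGdef
    have hGcard : G.card = c := by
      rw [hGdef]
      have : ((Finset.Icc 1 n).filter (fun z => τ z ≤ c)).card = (Finset.Icc 1 c).card := by
        apply Finset.card_bij (fun z _ => τ z)
        · intro z hz
          rw [Finset.mem_filter, Finset.mem_Icc] at hz
          have := hbij.mapsTo (Set.mem_Icc.2 ⟨hz.1.1, hz.1.2⟩)
          rw [Set.mem_Icc] at this
          rw [Finset.mem_Icc]
          exact ⟨this.1, hz.2⟩
        · intro z1 hz1 z2 hz2 h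
          rw [Finset.mem_filter, Finset.mem_Icc] at hz1 hz2
          exact hbij.injOn (Set.mem_Icc.2 hz1.1) (Set.mem_Icc.2 hz2.1) h
        · intro b hb
          rw [Finset.mem_Icc] at hb
          obtain ⟨z, hz, hzb⟩ := hbij.surjOn (Set.mem_Icc.2 ⟨hb.1, hb.2.trans hcn⟩)
          rw [Set.mem_Icc] at hz
          refine ⟨z, ?_, hzb⟩
          rw [Finset.mem_filter, Finset.mem_Icc]
          exact ⟨⟨hz.1, hz.2⟩, by rw [hzb]; exact hb.2⟩
      rw [this, Nat.card_Icc]; omega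
    set G1 := (Finset.Icc 1 d).filter (fun z => τ z ≤ c) with hG1def
    set G2 := (Finset.Icc (d + 1) n).filter (fun z => τ z ≤ c) with hG2def
    have hG1card : κ q + G1.card = d := by
      have := Finset.card_filter_add_card_filter_not (s := Finset.Icc 1 d)
        (p := fun ℓ => c < τ ℓ)
      have heq : (Finset.Icc 1 d).filter (fun ℓ => ¬ c < τ ℓ) = G1 := by
        rw [hG1def]; apply Finset.filter_congr; intro z _; simp [not_lt]
      rw [heq, ← hFdef] at this
      rw [hκF]
      rw [Nat.card_Icc] at this
      omega
    have hGsplit : G.card = G1.card + G2.card := by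
      have hIcc : Finset.Icc 1 n = Finset.Icc 1 d ∪ Finset.Icc (d + 1) n := by
        ext z; simp only [Finset.mem_Icc, Finset.mem_union]; omega
      have hdisj : Disjoint G1 G2 := by
        rw [Finset.disjoint_left]
        intro z hz1 hz2
        rw [hG1def, Finset.mem_filter, Finset.mem_Icc] at hz1
        rw [hG2def, Finset.mem_filter, Finset.mem_Icc] at hz2
        omega
      rw [hGdef, hIcc, Finset.filter_union, Finset.card_union_of_disjoint hdisj]
    have hG2sub : G2 ⊆ Finset.Icc (d + 1) (y - 1) := by
      intro z hz
      rw [hG2def, Finset.mem_filter, Finset.mem_Icc] at hz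
      rw [Finset.mem_Icc]
      refine ⟨hz.1.1, ?_⟩
      by_contra hzy
      push_neg at hzy
      have : τ y ≤ τ z := hmono2.monotoneOn (Set.mem_Icc.2 ⟨hy1, hy2⟩)
        (Set.mem_Icc.2 ⟨hz.1.1, hz.1.2⟩) (by omega)
      omega
    have hG2card : G2.card ≤ y - 1 - d := by
      have := Finset.card_le_card hG2sub
      rw [Nat.card_Icc] at this
      omega
    omega
  -- the chain finset
  set Cfin := P.filter (fun s => τ s.1 ≤ c ∧ c < τ s.2) with hCdef
  have hCmemL : ∀ p ∈ Cfin, p ∈ L := by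
    intro p hp
    rw [hCdef, Finset.mem_filter] at hp
    exact (hPmem p).1 hp.1
  have hCcard : (Cfin.card : ℤ) ≤ (d : ℤ) - κ q - q := by
    apply hchain q ⟨hq1, hqd⟩
    · intro p hp; exact hL p (hCmemL p hp)
    · intro p hp r hr hpr
      exact hchainOr p (hCmemL p hp) r (hCmemL r hr) hpr
    · intro p hp
      have hpL := hCmemL p hp
      have hb := hLS p hpL
      rw [hCdef, Finset.mem_filter] at hp
      have h1 := halpha p.1 hb.1 hb.2.1 hp.2.1
      have h2 := hbeta p.2 hb.2.2.1 hb.2.2.2 hp.2.2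
      constructor <;> [skip; skip] <;> push_cast <;> omega
  -- counting the big values among f(1..d)
  set T := (Finset.Icc 1 d).filter (fun x => c < f x) with hTdef
  set Q1 := P.filter (fun s => c < τ s.1) with hQ1def
  set Q2 := P.filter (fun s => c < τ s.2) with hQ2def
  have hfst_injQ : ∀ (Q : Finset (ℕ × ℕ)), Q ⊆ P → Set.InjOn Prod.fst (Q : Set (ℕ × ℕ)) := by
    intro Q hQP s hs t ht hst
    simp only [Finset.mem_coe] at hs ht
    have hsL := (hPmem s).1 (hQP hs)
    have htL := (hPmem t).1 (hQP ht)
    by_contra hne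
    exact (hforall s hsL t htL hne).1 hst
  have hT1 : T.filter (fun x => x ∈ Afin) = Q2.image Prod.fst := by
    ext x
    simp only [hTdef, hQ2def, Finset.mem_filter, Finset.mem_Icc, Finset.mem_image]
    constructor
    · rintro ⟨⟨hx, hcf⟩, hxA⟩
      obtain ⟨s, hsL, hsx⟩ := (hmemA x).1 hxA
      refine ⟨s, ⟨(hPmem s).2 hsL, ?_⟩, hsx⟩
      have := hfs s hsL
      rw [hsx] at this
      rw [← this]; exact hcf
    · rintro ⟨s, ⟨hsP, hcs⟩, hsx⟩
      have hsL := (hPmem s).1 hsP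
      have hb := hLS s hsL
      subst hsx
      refine ⟨⟨⟨hb.1, hb.2.1⟩, ?_⟩, (hmemA s.1).2 ⟨s, hsL, rfl⟩⟩
      rw [hfs s hsL]; exact hcs
  have hF1 : F.filter (fun x => x ∈ Afin) = Q1.image Prod.fst := by
    ext x
    simp only [hFdef, hQ1def, Finset.mem_filter, Finset.mem_Icc, Finset.mem_image]
    constructor
    · rintro ⟨⟨hx, hcf⟩, hxA⟩
      obtain ⟨s, hsL, hsx⟩ := (hmemA x).1 hxA
      exact ⟨s, ⟨(hPmem s).2 hsL, hsx ▸ hcf⟩, hsx⟩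
    · rintro ⟨s, ⟨hsP, hcs⟩, hsx⟩
      have hsL := (hPmem s).1 hsP
      have hb := hLS s hsL
      subst hsx
      exact ⟨⟨⟨hb.1, hb.2.1⟩, hcs⟩, (hmemA s.1).2 ⟨s, hsL, rfl⟩⟩
  have hTF : T.filter (fun x => ¬ x ∈ Afin) = F.filter (fun x => ¬ x ∈ Afin) := by
    ext x
    simp only [hTdef, hFdef, Finset.mem_filter, Finset.mem_Icc]
    constructor
    · rintro ⟨⟨hx, hcf⟩, hxA⟩
      exact ⟨⟨hx, by rw [← hfA x hx.2 hxA]; exact hcf⟩, hxA⟩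
    · rintro ⟨⟨hx, hcf⟩, hxA⟩
      exact ⟨⟨hx, by rw [hfA x hx.2 hxA]; exact hcf⟩, hxA⟩
  have hQ2sub : Q2 ⊆ Q1 ∪ Cfin := by
    intro s hs
    rw [hQ2def, Finset.mem_filter] at hs
    rw [Finset.mem_union, hQ1def, hCdef, Finset.mem_filter, Finset.mem_filter]
    by_cases h : τ s.1 ≤ c
    · exact Or.inr ⟨hs.1, h, hs.2⟩
    · exact Or.inl ⟨hs.1, by omega⟩
  have hQ2card : Q2.card ≤ Q1.card + Cfin.card :=
    (Finset.card_le_card hQ2sub).trans (Finset.card_union_le _ _)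
  have eT : (T.filter (fun x => x ∈ Afin)).card + (T.filter (fun x => ¬ x ∈ Afin)).card = T.card :=
    Finset.card_filter_add_card_filter_not _
  have eF : (F.filter (fun x => x ∈ Afin)).card + (F.filter (fun x => ¬ x ∈ Afin)).card = F.card :=
    Finset.card_filter_add_card_filter_not _
  have eQ1 : (Q1.image Prod.fst).card = Q1.card :=
    Finset.card_image_of_injOn (hfst_injQ Q1 (Finset.filter_subset _ _))
  have eQ2 : (Q2.image Prod.fst).card = Q2.card :=
    Finset.card_image_of_injOn (hfst_injQ Q2 (Finset.filter_subset _ _))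
  have hTcard : (T.card : ℤ) ≤ (d : ℤ) - q := by
    have e1 : Q2.card + (T.filter (fun x => ¬ x ∈ Afin)).card = T.card := by
      rw [← eQ2, ← hT1]; exact eT
    have e2 : Q1.card + (F.filter (fun x => ¬ x ∈ Afin)).card = κ q := by
      rw [← eQ1, ← hF1, hκF]; exact eF
    have e3 : (T.filter (fun x => ¬ x ∈ Afin)).card = (F.filter (fun x => ¬ x ∈ Afin)).card := by
      rw [hTF]
    clear_value q c T Q1 Q2 Cfin F P Afin
    omega
  -- conclude
  have hVfilt : (V.filter (fun v => c < v)).card = T.card := by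
    rw [hVdef, Finset.filter_image]
    exact Finset.card_image_of_injOn (hinj.mono (by
      intro x hx
      simp only [Finset.coe_filter, Set.mem_setOf_eq] at hx
      exact Finset.mem_coe.2 hx.1))
  have hVsplit : (V.filter (fun v => c < v)).card + (V.filter (fun v => ¬ c < v)).card = V.card :=
    Finset.card_filter_add_card_filter_not _
  have hVle : (V.filter (fun v => v ≤ c)).card = (V.filter (fun v => ¬ c < v)).card := by
    apply Finset.card_bij (fun v _ => v) <;> simp [not_lt]
  -- the sorted list
  have hgoal : (V.sort (· ≤ ·)).getD k 0 ≤ c := by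
    apply sorted_get_le c _ (Finset.pairwise_sort _ _)
    · rw [Finset.length_sort, hVcard]; omega
    · have hlen : ((V.sort (· ≤ ·)).filter (fun x => x ≤ c)).length
          = (V.filter (fun v => v ≤ c)).card := by
        have h1 : ((V.sort (· ≤ ·) : List ℕ) : Multiset ℕ) = V.val := Finset.sort_eq _ _
        have h2 : (V.filter (fun v => v ≤ c)).val = Multiset.filter (fun v => v ≤ c) V.val :=
          Finset.filter_val _ _
        calc ((V.sort (· ≤ ·)).filter (fun x => x ≤ c)).length
            = Multiset.card (((V.sort (· ≤ ·)).filter (fun x => x ≤ c) : List ℕ) : Multiset ℕ) := by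
              simp
          _ = Multiset.card (Multiset.filter (fun v => v ≤ c) V.val) := by
              rw [← h1, Multiset.filter_coe]
          _ = (V.filter (fun v => v ≤ c)).card := by rw [← h2]; rfl
      rw [hlen, hVle]
      clear_value q c V T
      omega
  show (sortedFirstVals d f).getD k 0 ≤ c
  unfold sortedFirstVals
  rw [← hVdef]
  exact hgoal
end

section
/- Let S be a finite multiset of points in the rectangle {(x,y) : 1 ≤ x ≤ d, d+1 ≤ y ≤ i_d} satisfying the chain condition with respect to the end points E_q = (d−κ_q, κ_q+i_q). Then the light-and-shadow procedure with the sun in the south-east, applied iteratively d times starting from A_1 and E_{σ(1)}, produces a family of d non-intersecting north-east lattice paths with P_ℓ from A_ℓ to E_{σ(ℓ)} whose lattice points with y-coordinate > d cover all points of S. -/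
def NEStep (p q : ℤ × ℤ) : Prop := q = (p.1 + 1, p.2) ∨ q = (p.1, p.2 + 1)

def IsNEPathFrom (P : List (ℤ × ℤ)) (A E : ℤ × ℤ) : Prop :=
  P.head? = some A ∧ P.getLast? = some E ∧ List.Chain' NEStep P

def IsPtChain (C : Finset (ℤ × ℤ)) : Prop :=
  ∀ p ∈ C, ∀ r ∈ C, p ≠ r → (p.1 < r.1 ∧ r.2 < p.2) ∨ (r.1 < p.1 ∧ p.2 < r.2)


/-! ### Staircase path infrastructure -/

/-- The vertical list of lattice points from `(x, y1)` up to `(x, y2)`. -/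
def colList (x y1 y2 : ℤ) : List (ℤ × ℤ) :=
  (List.range ((y2 - y1).toNat + 1)).map (fun t : ℕ => (x, y1 + (t : ℤ)))

lemma colList_ne_nil (x y1 y2 : ℤ) : colList x y1 y2 ≠ [] := by
  simp [colList]

lemma colList_head? (x y1 y2 : ℤ) : (colList x y1 y2).head? = some (x, y1) := by
  rw [colList, List.range_succ_eq_map]
  simp

lemma colList_getLast? (x y1 y2 : ℤ) (h : y1 ≤ y2) :
    (colList x y1 y2).getLast? = some (x, y2) := by
  rw [colList, List.range_succ, List.map_append, List.map_singleton,
    List.getLast?_concat]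
  have : y1 + ((y2 - y1).toNat : ℤ) = y2 := by omega
  rw [this]

lemma colList_chain' (x y1 y2 : ℤ) : List.Chain' NEStep (colList x y1 y2) := by
  rw [colList, List.Chain', List.isChain_map, List.isChain_range_succ]
  intro m hm
  right
  rw [Prod.ext_iff]
  constructor
  · rfl
  · simp only
    push_cast
    ring

lemma colList_mem (x y1 y2 : ℤ) (h : y1 ≤ y2) (p : ℤ × ℤ) :
    p ∈ colList x y1 y2 ↔ p.1 = x ∧ y1 ≤ p.2 ∧ p.2 ≤ y2 := by
  simp only [colList, List.mem_map, List.mem_range]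
  constructor
  · rintro ⟨t, ht, rfl⟩
    exact ⟨rfl, by simp, by simp; omega⟩
  · rintro ⟨h1, h2, h3⟩
    refine ⟨(p.2 - y1).toNat, by omega, ?_⟩
    rw [Prod.ext_iff]
    constructor
    · simp [h1]
    · simp only
      omega

/-- Staircase path: columns `a, a+1, …, a+n`, with column `a+t` occupying the
`y`-interval from the top of the previous column up to `g (a+t)`; the first
column starts at `y`. -/
def stair (g : ℤ → ℤ) (a y : ℤ) : ℕ → List (ℤ × ℤ)
  | 0 => colList a y (g a)
  | n+1 => stair g a y n ++ colList (a + n + 1) (g (a + n)) (g (a + n + 1))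

lemma stair_ne_nil (g : ℤ → ℤ) (a y : ℤ) (n : ℕ) : stair g a y n ≠ [] := by
  cases n with
  | zero => exact colList_ne_nil _ _ _
  | succ m => simp [stair, colList_ne_nil]

lemma stair_head? (g : ℤ → ℤ) (a y : ℤ) (n : ℕ) :
    (stair g a y n).head? = some (a, y) := by
  induction n with
  | zero => exact colList_head? _ _ _
  | succ m ih =>
    rw [stair, List.head?_append, ih]
    rfl

lemma stair_getLast? (g : ℤ → ℤ) (a y : ℤ) (n : ℕ)
    (hy : y ≤ g a) (hmono : ∀ t : ℕ, t < n → g (a + t) ≤ g (a + t + 1)) :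
    (stair g a y n).getLast? = some (a + n, g (a + n)) := by
  induction n with
  | zero => simpa [stair] using colList_getLast? a y (g a) hy
  | succ m ih =>
    have hc : ((m+1 : ℕ) : ℤ) = (m : ℤ) + 1 := by push_cast; ring
    have he : a + ((m : ℤ) + 1) = a + (m : ℤ) + 1 := by ring
    rw [stair, List.getLast?_append, colList_getLast? _ _ _ (hmono m (by omega)), hc, he]
    rfl

lemma stair_chain' (g : ℤ → ℤ) (a y : ℤ) (n : ℕ)
    (hy : y ≤ g a) (hmono : ∀ t : ℕ, t < n → g (a + t) ≤ g (a + t + 1)) :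
    List.Chain' NEStep (stair g a y n) := by
  induction n with
  | zero => exact colList_chain' _ _ _
  | succ m ih =>
    rw [stair]
    apply List.IsChain.append (ih (fun t ht => hmono t (by omega))) (colList_chain' _ _ _)
    intro x hx z hz
    rw [stair_getLast? g a y m hy (fun t ht => hmono t (by omega))] at hx
    rw [colList_head?] at hz
    simp only [Option.mem_def, Option.some.injEq] at hx hz
    subst hx; subst hz
    left
    rfl

lemma stair_mem (g : ℤ → ℤ) (a y : ℤ) (n : ℕ)
    (hy : y ≤ g a) (hmono : ∀ t : ℕ, t < n → g (a + t) ≤ g (a + t + 1))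
    (p : ℤ × ℤ) :
    p ∈ stair g a y n ↔ ∃ t : ℕ, t ≤ n ∧ p.1 = a + t ∧
      (if t = 0 then y else g (a + t - 1)) ≤ p.2 ∧ p.2 ≤ g (a + t) := by
  induction n with
  | zero =>
    rw [stair, colList_mem _ _ _ hy]
    constructor
    · rintro ⟨h1, h2, h3⟩
      exact ⟨0, le_refl 0, by simpa using h1, by simpa using h2, by simpa using h3⟩
    · rintro ⟨t, ht, h1, h2, h3⟩
      interval_cases t
      rw [if_pos rfl] at h2
      exact ⟨by simpa using h1, h2, by simpa using h3⟩
  | succ m ih =>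
    have hc : ((m+1 : ℕ) : ℤ) = (m : ℤ) + 1 := by push_cast; ring
    rw [stair, List.mem_append,
      ih (fun t ht => hmono t (by omega)),
      colList_mem _ _ _ (hmono m (by omega))]
    constructor
    · rintro (⟨t, ht, h1, h2, h3⟩ | ⟨h1, h2, h3⟩)
      · exact ⟨t, by omega, h1, h2, h3⟩
      · refine ⟨m + 1, le_refl _, by rw [hc]; omega, ?_, ?_⟩
        · rw [if_neg (Nat.succ_ne_zero m), hc]
          have he : a + ((m : ℤ) + 1) - 1 = a + m := by ring
          rw [he]
          exact h2
        · rw [hc]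
          have he : a + ((m : ℤ) + 1) = a + m + 1 := by ring
          rw [he]
          exact h3
    · rintro ⟨t, ht, h1, h2, h3⟩
      rcases Nat.lt_or_ge t (m+1) with h | h
      · exact Or.inl ⟨t, by omega, h1, h2, h3⟩
      · have : t = m + 1 := by omega
        subst this
        right
        rw [hc] at h1 h3
        rw [if_neg (Nat.succ_ne_zero m)] at h2
        rw [hc] at h2
        have he : a + ((m : ℤ) + 1) - 1 = a + m := by ring
        have he2 : a + ((m : ℤ) + 1) = a + m + 1 := by ring
        rw [he] at h2
        rw [he2] at h1 h3
        exact ⟨h1, h2, h3⟩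


/-- Along a NE path, every point is componentwise at most the last point. -/
lemma chain'_le_getLast :
    ∀ (P : List (ℤ × ℤ)), List.Chain' NEStep P → ∀ E, P.getLast? = some E →
      ∀ p ∈ P, p.1 ≤ E.1 ∧ p.2 ≤ E.2 := by
  intro P
  induction P with
  | nil => intro _ E _ p hp; simp at hp
  | cons a l ih =>
    intro hch E hlast p hp
    cases l with
    | nil =>
      simp only [List.getLast?_singleton, Option.some.injEq] at hlast
      simp only [List.mem_singleton] at hp
      subst hlast; subst hp
      exact ⟨le_refl _, le_refl _⟩
    | cons b m =>
      have hch' : List.Chain' NEStep (b :: m) := (List.isChain_cons_cons.mp hch).2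
      have hlast' : (b :: m).getLast? = some E := by
        rwa [List.getLast?_cons_cons] at hlast
      rcases List.mem_cons.mp hp with rfl | hp'
      · have hab : NEStep p b := (List.isChain_cons_cons.mp hch).1
        have hb := ih hch' E hlast' b (List.mem_cons_self (a := b) (l := m))
        rcases hab with h | h <;> rw [h] at hb <;> simp only at hb <;>
          exact ⟨by omega, by omega⟩
      · exact ih hch' E hlast' p hp'

/-- The engine, with an explicit bound on `d` for strong induction. -/
lemma lightShadowAuxN (N : ℕ) : ∀ (d : ℕ), d ≤ N → ∀ (y0 : ℤ) (e : ℕ → ℤ × ℤ)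
    (T : Finset (ℤ × ℤ)), 1 ≤ d →
    (∀ q q', 1 ≤ q → q ≤ q' → q' ≤ d →
      (e q).1 ≤ (e q').1 ∧ (e q).2 ≤ (e q').2) →
    (∀ q ∈ Set.Icc 1 d, ∀ q' ∈ Set.Icc 1 d, e q = e q' → q = q') →
    (∀ q ∈ Set.Icc 1 d, (q : ℤ) ≤ (e q).1) →
    (∀ q ∈ Set.Icc 1 d, (e q).1 ≤ (d : ℤ)) →
    (∀ q ∈ Set.Icc 1 d, y0 ≤ (e q).2) →
    (∀ p ∈ T, 1 ≤ p.1 ∧ y0 < p.2 ∧ p.1 ≤ (e d).1 ∧ p.2 ≤ (e d).2) →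
    (∀ q ∈ Set.Icc 1 d, ∀ C : Finset (ℤ × ℤ),
      (∀ p ∈ C, p ∈ T) → IsPtChain C →
      (∀ p ∈ C, p.1 ≤ (e q).1 ∧ (e q).2 < p.2) →
      (C.card : ℤ) ≤ (e q).1 - q) →
    ∃ (τ : ℕ → ℕ) (P : ℕ → List (ℤ × ℤ)),
      Set.BijOn τ (Set.Icc 1 d) (Set.Icc 1 d) ∧
      (∀ k ∈ Set.Icc 1 d, IsNEPathFrom (P k) ((k : ℤ), y0) (e (τ k))) ∧
      (∀ k ∈ Set.Icc 1 d, ∀ l ∈ Set.Icc 1 d, k ≠ l → ∀ p ∈ P k, p ∉ P l) ∧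
      (∀ p ∈ T, ∃ k ∈ Set.Icc 1 d, p ∈ P k) := by
  induction N with
  | zero => intro d hdN _ _ _ hd; omega
  | succ N IH =>
    intro d hdN y0 e T hd hmono hinj hm hmd hh hT hchain
    -- the first index of the block of end points in column `d`
    have hedd : (e d).1 = (d : ℤ) :=
      le_antisymm (hmd d (by simp [Set.mem_Icc]; omega)) (hm d (by simp [Set.mem_Icc]; omega))
    have hFne : ((Finset.Icc 1 d).filter (fun q => (e q).1 = (d : ℤ))).Nonempty := by
      refine ⟨d, ?_⟩
      simp only [Finset.mem_filter, Finset.mem_Icc]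
      exact ⟨⟨hd, le_refl d⟩, hedd⟩
    set F := (Finset.Icc 1 d).filter (fun q => (e q).1 = (d : ℤ)) with hF
    set a := F.min' hFne with ha
    have haF : a ∈ F := F.min'_mem hFne
    have ha1 : 1 ≤ a ∧ a ≤ d := by
      have := haF; rw [hF] at this
      simp only [Finset.mem_filter, Finset.mem_Icc] at this
      exact this.1
    have hea : (e a).1 = (d : ℤ) := by
      have := haF; rw [hF] at this
      simp only [Finset.mem_filter, Finset.mem_Icc] at this
      exact this.2
    have hblock : ∀ q, a ≤ q → q ≤ d → (e q).1 = (d : ℤ) := by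
      intro q h1 h2
      have h3 := (hmono a q ha1.1 h1 h2).1
      have h4 := hmd q (by simp [Set.mem_Icc]; omega)
      omega
    have hlow : ∀ q, 1 ≤ q → q < a → (e q).1 ≤ (d : ℤ) - 1 := by
      intro q h1 h2
      have h4 := hmd q (by simp [Set.mem_Icc]; omega)
      by_contra hc
      have heq : (e q).1 = (d : ℤ) := by omega
      have : a ≤ q := by
        rw [ha]
        exact F.min'_le q (by
          rw [hF]; simp only [Finset.mem_filter, Finset.mem_Icc]
          exact ⟨⟨h1, by omega⟩, heq⟩)
      omega
    clear_value a
    -- strictly increasing second coordinates within the block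
    have hhstrict : ∀ q q', a ≤ q → q < q' → q' ≤ d → (e q).2 < (e q').2 := by
      intro q q' h1 h2 h3
      have h4 := (hmono q q' (by omega) (by omega) h3).2
      rcases lt_or_eq_of_le h4 with h | h
      · exact h
      · exfalso
        have e1 : (e q).1 = (d : ℤ) := hblock q h1 (by omega)
        have e2 : (e q').1 = (d : ℤ) := hblock q' (by omega) h3
        have : e q = e q' := Prod.ext (by rw [e1, e2]) h
        have := hinj q (by simp [Set.mem_Icc]; omega) q' (by simp [Set.mem_Icc]; omega) this
        omega
    -- the transformed entry height for a block end `q > a`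
    set fs : ℕ → Finset (ℤ × ℤ) := fun q =>
      T.filter (fun p => p.1 = (d : ℤ) ∧ (e (q-1)).2 < p.2 ∧ p.2 ≤ (e q).2) with hfs
    set t : ℕ → ℤ := fun q => (fs q).fold min ((e q).2) Prod.snd with htdef
    have htle : ∀ q, t q ≤ (e q).2 := by
      intro q
      rw [htdef]
      simp only
      rw [Finset.fold_min_le]
      exact Or.inl (le_refl _)
    have htgt : ∀ q, a < q → q ≤ d → (e (q-1)).2 < t q := by
      intro q h1 h2
      have h3 : (e (q-1)).2 + 1 ≤ t q := by
        rw [htdef]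
        simp only
        rw [Finset.le_fold_min]
        constructor
        · have := hhstrict (q-1) q (by omega) (by omega) h2
          omega
        · intro p hp
          rw [hfs] at hp
          simp only [Finset.mem_filter] at hp
          omega
      omega
    have htpt : ∀ q, ∀ p ∈ fs q, t q ≤ p.2 := by
      intro q p hp
      rw [htdef]
      simp only
      rw [Finset.fold_min_le]
      exact Or.inr ⟨p, hp, le_refl _⟩
    by_cases hd1 : d = 1
    · -- base case: a single vertical path
      subst hd1
      have he1 : (e 1).1 = 1 := by
        have h1 := hm 1 (by simp)
        have h2 := hmd 1 (by simp)
        omega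
      have hh1 : y0 ≤ (e 1).2 := hh 1 (by simp)
      refine ⟨fun _ => 1, fun _ => colList 1 y0 (e 1).2, ?_, ?_, ?_, ?_⟩
      · refine ⟨?_, ?_, ?_⟩
        · intro x hx
          show (1 : ℕ) ∈ Set.Icc 1 1
          simp
        · intro x hx y hy _
          simp only [Set.mem_Icc] at hx hy
          omega
        · intro y hy
          simp only [Set.mem_Icc] at hy
          refine ⟨1, by simp, ?_⟩
          show 1 = y
          omega
      · intro k hk
        show IsNEPathFrom (colList 1 y0 (e 1).2) ((k : ℤ), y0) (e 1)
        simp only [Set.mem_Icc] at hk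
        have hk1 : k = 1 := by omega
        subst hk1
        refine ⟨colList_head? _ _ _, ?_, colList_chain' _ _ _⟩
        rw [colList_getLast? _ _ _ hh1]
        rw [show ((1 : ℤ), (e 1).2) = e 1 from Prod.ext_iff.mpr ⟨he1.symm, rfl⟩]
      · intro k hk l hl hkl
        simp only [Set.mem_Icc] at hk hl
        omega
      · intro p hp
        have h0 := hT p hp
        refine ⟨1, by simp [Set.mem_Icc], ?_⟩
        rw [colList_mem _ _ _ hh1]
        refine ⟨by omega, by omega, h0.2.2.2⟩
    · -- inductive case: d ≥ 2
      have hd2 : 2 ≤ d := by omega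
      set e' : ℕ → ℤ × ℤ := fun r => if r < a then e r else ((d : ℤ) - 1, t (r+1)) with he'
      set T' := T.filter (fun p => p.1 ≤ (d : ℤ) - 1) with hT'def
      have hT'sub : ∀ p ∈ T', p ∈ T ∧ p.1 ≤ (d : ℤ) - 1 := by
        intro p hp
        rw [hT'def] at hp
        exact Finset.mem_filter.mp hp
      have ob_mono : ∀ q q', 1 ≤ q → q ≤ q' → q' ≤ d - 1 →
          (e' q).1 ≤ (e' q').1 ∧ (e' q).2 ≤ (e' q').2 := by
        intro q q' h1 h2 h3
        rw [he']
        by_cases hq : q < a <;> by_cases hq' : q' < a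
        · simp only [if_pos hq, if_pos hq']
          exact hmono q q' h1 h2 (by omega)
        · simp only [if_pos hq, if_neg hq']
          constructor
          · have := hlow q h1 hq
            exact this
          · show (e q).2 ≤ t (q'+1)
            rw [htdef]
            simp only
            rw [Finset.le_fold_min]
            constructor
            · exact (hmono q (q'+1) h1 (by omega) (by omega)).2
            · intro p hp
              rw [hfs] at hp
              simp only [Finset.mem_filter, Nat.add_sub_cancel] at hp
              have h5 : (e q).2 ≤ (e q').2 := (hmono q q' h1 h2 (by omega)).2
              omega
        · omega
        · simp only [if_neg hq, if_neg hq']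
          refine ⟨le_refl _, ?_⟩
          rcases eq_or_lt_of_le h2 with rfl | hlt
          · exact le_refl _
          · have hA : t (q+1) ≤ (e (q+1)).2 := htle (q+1)
            have hB : (e (q+1)).2 ≤ (e q').2 := (hmono (q+1) q' (by omega) (by omega) (by omega)).2
            have hC := htgt (q'+1) (by omega) (by omega)
            rw [Nat.add_sub_cancel] at hC
            show t (q+1) ≤ t (q'+1)
            omega
      have ob_inj : ∀ q ∈ Set.Icc 1 (d-1), ∀ q' ∈ Set.Icc 1 (d-1), e' q = e' q' → q = q' := by
        have key : ∀ x x', 1 ≤ x → x < x' → x' ≤ d - 1 → e' x ≠ e' x' := by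
          intro x x' k1 k2 k3 keq
          rw [he'] at keq
          by_cases hx : x < a <;> by_cases hx' : x' < a
          · simp only [if_pos hx, if_pos hx'] at keq
            have := hinj x (by simp only [Set.mem_Icc]; omega) x'
              (by simp only [Set.mem_Icc]; omega) keq
            omega
          · simp only [if_pos hx, if_neg hx'] at keq
            have h1 : (e x).2 = t (x'+1) := congrArg Prod.snd keq
            have hC := htgt (x'+1) (by omega) (by omega)
            rw [Nat.add_sub_cancel] at hC
            have h2 : (e x).2 ≤ (e x').2 := (hmono x x' k1 (by omega) (by omega)).2
            omega
          · omega
          · simp only [if_neg hx, if_neg hx'] at keq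
            have h1 : t (x+1) = t (x'+1) := congrArg Prod.snd keq
            have hA := htle (x+1)
            have hB : (e (x+1)).2 ≤ (e x').2 := (hmono (x+1) x' (by omega) (by omega) (by omega)).2
            have hC := htgt (x'+1) (by omega) (by omega)
            rw [Nat.add_sub_cancel] at hC
            omega
        intro q hq q' hq' heq
        simp only [Set.mem_Icc] at hq hq'
        by_contra hne
        rcases Ne.lt_or_gt hne with hlt | hlt
        · exact key q q' hq.1 hlt hq'.2 heq
        · exact key q' q hq'.1 hlt hq.2 heq.symm
      have ob_m : ∀ q ∈ Set.Icc 1 (d-1), (q : ℤ) ≤ (e' q).1 := by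
        intro q hq
        simp only [Set.mem_Icc] at hq
        rw [he']
        by_cases hqa : q < a
        · simp only [if_pos hqa]
          exact hm q (by simp only [Set.mem_Icc]; omega)
        · simp only [if_neg hqa]
          show (q : ℤ) ≤ (d : ℤ) - 1
          omega
      have ob_md : ∀ q ∈ Set.Icc 1 (d-1), (e' q).1 ≤ ((d-1 : ℕ) : ℤ) := by
        intro q hq
        simp only [Set.mem_Icc] at hq
        rw [he']
        by_cases hqa : q < a
        · simp only [if_pos hqa]
          have := hlow q hq.1 hqa
          omega
        · simp only [if_neg hqa]
          show (d : ℤ) - 1 ≤ ((d-1 : ℕ) : ℤ)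
          omega
      have ob_h : ∀ q ∈ Set.Icc 1 (d-1), y0 ≤ (e' q).2 := by
        intro q hq
        simp only [Set.mem_Icc] at hq
        rw [he']
        by_cases hqa : q < a
        · simp only [if_pos hqa]
          exact hh q (by simp only [Set.mem_Icc]; omega)
        · simp only [if_neg hqa]
          show y0 ≤ t (q+1)
          rw [htdef]
          simp only
          rw [Finset.le_fold_min]
          constructor
          · exact hh (q+1) (by simp only [Set.mem_Icc]; omega)
          · intro p hp
            rw [hfs] at hp
            simp only [Finset.mem_filter] at hp
            have := hT p hp.1
            omega
      have ob_T : ∀ p ∈ T', 1 ≤ p.1 ∧ y0 < p.2 ∧ p.1 ≤ (e' (d-1)).1 ∧ p.2 ≤ (e' (d-1)).2 := by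
        intro p hp
        obtain ⟨hpT, hpd⟩ := hT'sub p hp
        have h0 := hT p hpT
        refine ⟨h0.1, h0.2.1, ?_, ?_⟩
        · rw [he']
          by_cases hda : d - 1 < a
          · simp only [if_pos hda]
            have := hm (d-1) (by simp only [Set.mem_Icc]; omega)
            omega
          · simp only [if_neg hda]
            show p.1 ≤ (d : ℤ) - 1
            exact hpd
        · rw [he']
          by_cases hda : d - 1 < a
          · simp only [if_pos hda]
            by_contra hc
            push_neg at hc
            have hmd1 : (e (d-1)).1 ≤ (d : ℤ) - 1 := hlow (d-1) (by omega) (by omega)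
            have hm1 : ((d-1 : ℕ) : ℤ) ≤ (e (d-1)).1 := hm (d-1) (by simp only [Set.mem_Icc]; omega)
            have hcc := hchain (d-1) (by simp only [Set.mem_Icc]; omega) {p}
              (by intro r hr; simp only [Finset.mem_singleton] at hr; subst hr; exact hpT)
              (by intro r hr s hs hrs; simp only [Finset.mem_singleton] at hr hs
                  subst hr; subst hs; exact absurd rfl hrs)
              (by intro r hr; simp only [Finset.mem_singleton] at hr; subst hr
                  exact ⟨by omega, hc⟩)
            simp only [Finset.card_singleton] at hcc
            omega
          · simp only [if_neg hda]
            show p.2 ≤ t ((d-1) + 1)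
            have hd1d : d - 1 + 1 = d := by omega
            rw [hd1d]
            by_contra hc
            push_neg at hc
            have h1 : t d ≤ p.2 - 1 := by omega
            rw [htdef] at h1
            simp only at h1
            rw [Finset.fold_min_le] at h1
            rcases h1 with h | ⟨r, hr, hr2⟩
            · have := h0.2.2.2
              omega
            · rw [hfs] at hr
              simp only [Finset.mem_filter] at hr
              have hne : p ≠ r := by
                intro hpr
                rw [hpr] at hpd
                omega
              have hblk : (e (d-1)).1 = (d : ℤ) := hblock (d-1) (by omega) (by omega)
              have hcc := hchain (d-1) (by simp only [Set.mem_Icc]; omega) {p, r}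
                (by intro u hu
                    simp only [Finset.mem_insert, Finset.mem_singleton] at hu
                    rcases hu with rfl | rfl
                    · exact hpT
                    · exact hr.1)
                (by intro u hu v hv huv
                    simp only [Finset.mem_insert, Finset.mem_singleton] at hu hv
                    rcases hu with rfl | rfl <;> rcases hv with rfl | rfl
                    · exact absurd rfl huv
                    · exact Or.inl ⟨by omega, by omega⟩
                    · exact Or.inr ⟨by omega, by omega⟩
                    · exact absurd rfl huv)
                (by intro u hu
                    simp only [Finset.mem_insert, Finset.mem_singleton] at hu
                    rcases hu with rfl | rfl
                    · exact ⟨by omega, by omega⟩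
                    · exact ⟨by omega, by omega⟩)
              rw [Finset.card_pair hne] at hcc
              omega
      have ob_chain : ∀ q ∈ Set.Icc 1 (d-1), ∀ C : Finset (ℤ × ℤ),
          (∀ p ∈ C, p ∈ T') → IsPtChain C →
          (∀ p ∈ C, p.1 ≤ (e' q).1 ∧ (e' q).2 < p.2) →
          (C.card : ℤ) ≤ (e' q).1 - q := by
        intro q hq C hCT hCch hCreg
        simp only [Set.mem_Icc] at hq
        rw [he'] at hCreg ⊢
        by_cases hqa : q < a
        · simp only [if_pos hqa] at hCreg ⊢
          exact hchain q (by simp only [Set.mem_Icc]; omega) C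
            (fun p hp => (hT'sub p (hCT p hp)).1) hCch hCreg
        · simp only [if_neg hqa] at hCreg ⊢
          have haq1 : a < q + 1 := by omega
          have hq1d : q + 1 ≤ d := by omega
          have hblk1 : (e (q+1)).1 = (d : ℤ) := hblock (q+1) (by omega) hq1d
          have hregfst : ∀ p ∈ C, p.1 ≤ (d : ℤ) - 1 := fun p hp => (hCreg p hp).1
          have hregsnd : ∀ p ∈ C, t (q+1) < p.2 := fun p hp => (hCreg p hp).2
          show (C.card : ℤ) ≤ (d : ℤ) - 1 - q
          by_cases hteq : t (q+1) = (e (q+1)).2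
          · have hcc := hchain (q+1) (by simp only [Set.mem_Icc]; omega) C
              (fun p hp => (hT'sub p (hCT p hp)).1) hCch
              (by intro p hp
                  refine ⟨by have := hregfst p hp; omega, ?_⟩
                  have := hregsnd p hp
                  omega)
            omega
          · have hex : ∃ r0 ∈ fs (q+1), r0.2 = t (q+1) := by
              by_contra hno
              push_neg at hno
              have habs : t (q+1) + 1 ≤ t (q+1) := by
                conv_rhs => rw [htdef]
                simp only
                rw [Finset.le_fold_min]
                constructor
                · have := htle (q+1)
                  omega
                · intro r0 hr0
                  have h1 := htpt (q+1) r0 hr0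
                  have h2 := hno r0 hr0
                  omega
              omega
            obtain ⟨r0, hr0fs, hr0t⟩ := hex
            have hr0 := hr0fs
            rw [hfs] at hr0
            simp only [Finset.mem_filter, Nat.add_sub_cancel] at hr0
            have hr0nC : r0 ∉ C := by
              intro hc
              have := hregfst r0 hc
              omega
            have hblk0 : (e q).1 = (d : ℤ) := hblock q (by omega) (by omega)
            have hcc := hchain q (by simp only [Set.mem_Icc]; omega) (insert r0 C)
              (by intro u hu
                  rcases Finset.mem_insert.mp hu with rfl | hu'
                  · exact hr0.1
                  · exact (hT'sub u (hCT u hu')).1)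
              (by intro u hu v hv huv
                  rcases Finset.mem_insert.mp hu with rfl | hu' <;>
                    rcases Finset.mem_insert.mp hv with rfl | hv'
                  · exact absurd rfl huv
                  · refine Or.inr ⟨?_, ?_⟩
                    · have := hregfst v hv'
                      omega
                    · have := hregsnd v hv'
                      omega
                  · refine Or.inl ⟨?_, ?_⟩
                    · have := hregfst u hu'
                      omega
                    · have := hregsnd u hu'
                      omega
                  · exact hCch u hu' v hv' huv)
              (by intro u hu
                  rcases Finset.mem_insert.mp hu with rfl | hu'
                  · exact ⟨by omega, hr0.2.2.1⟩
                  · refine ⟨by have := hregfst u hu'; omega, ?_⟩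
                    have h1 := hregsnd u hu'
                    have h2 := hr0.2.2.1
                    omega)
            rw [Finset.card_insert_of_notMem hr0nC] at hcc
            push_cast at hcc
            omega
      obtain ⟨τ', P', hbij', hpath', hdisj', hcov'⟩ :=
        IH (d-1) (by omega) y0 e' T' (by omega) ob_mono ob_inj ob_m ob_md ob_h ob_T ob_chain
      have hτ'mem : ∀ k ∈ Set.Icc 1 (d-1), 1 ≤ τ' k ∧ τ' k ≤ d - 1 := by
        intro k hk
        have := hbij'.mapsTo hk
        simpa [Set.mem_Icc] using this
      have hP'bound : ∀ k ∈ Set.Icc 1 (d-1), ∀ p ∈ P' k, p.1 ≤ (d : ℤ) - 1 := by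
        intro k hk p hp
        obtain ⟨hh', hl', hc'⟩ := hpath' k hk
        have h1 := chain'_le_getLast (P' k) hc' (e' (τ' k)) hl' p hp
        have h2 := ob_md (τ' k) (hbij'.mapsTo hk)
        omega
      have hextmem : ∀ r, a < r + 1 → r + 1 ≤ d →
          ∀ p ∈ colList (d : ℤ) (t (r+1)) (e (r+1)).2,
          p.1 = (d : ℤ) ∧ (e r).2 < p.2 ∧ p.2 ≤ (e (r+1)).2 := by
        intro r h1 h2 p hp
        rw [colList_mem _ _ _ (htle (r+1))] at hp
        have h3 := htgt (r+1) h1 h2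
        rw [Nat.add_sub_cancel] at h3
        exact ⟨hp.1, by omega, hp.2.2⟩
      refine ⟨fun k => if k = d then a else (if τ' k < a then τ' k else τ' k + 1),
        fun k => if k = d then colList (d : ℤ) y0 (e a).2 else
          (if τ' k < a then P' k else
            P' k ++ colList (d : ℤ) (t (τ' k + 1)) (e (τ' k + 1)).2), ?_, ?_, ?_, ?_⟩
      · -- BijOn
        refine ⟨?_, ?_, ?_⟩
        · intro k hk
          simp only [Set.mem_Icc] at hk
          by_cases hkd : k = d
          · show (if k = d then a else (if τ' k < a then τ' k else τ' k + 1)) ∈ Set.Icc 1 d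
            rw [if_pos hkd]
            simp only [Set.mem_Icc]
            omega
          · have hτ := hτ'mem k (by simp only [Set.mem_Icc]; omega)
            by_cases hτa : τ' k < a
            · simp only [if_neg hkd, if_pos hτa, Set.mem_Icc]
              omega
            · simp only [if_neg hkd, if_neg hτa, Set.mem_Icc]
              omega
        · intro k hk l hl heq
          simp only [Set.mem_Icc] at hk hl
          simp only at heq
          by_cases hkd : k = d <;> by_cases hld : l = d
          · omega
          · exfalso
            rw [if_pos hkd, if_neg hld] at heq
            have hτ := hτ'mem l (by simp only [Set.mem_Icc]; omega)
            by_cases hτa : τ' l < a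
            · rw [if_pos hτa] at heq; omega
            · rw [if_neg hτa] at heq; omega
          · exfalso
            rw [if_neg hkd, if_pos hld] at heq
            have hτ := hτ'mem k (by simp only [Set.mem_Icc]; omega)
            by_cases hτa : τ' k < a
            · rw [if_pos hτa] at heq; omega
            · rw [if_neg hτa] at heq; omega
          · rw [if_neg hkd, if_neg hld] at heq
            have hk' : k ∈ Set.Icc 1 (d-1) := by simp only [Set.mem_Icc]; omega
            have hl' : l ∈ Set.Icc 1 (d-1) := by simp only [Set.mem_Icc]; omega
            have hττ : τ' k = τ' l := by
              have hτk := hτ'mem k hk'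
              have hτl := hτ'mem l hl'
              by_cases h1 : τ' k < a <;> by_cases h2 : τ' l < a
              · rwa [if_pos h1, if_pos h2] at heq
              · rw [if_pos h1, if_neg h2] at heq; omega
              · rw [if_neg h1, if_pos h2] at heq; omega
              · rw [if_neg h1, if_neg h2] at heq; omega
            exact hbij'.injOn hk' hl' hττ
        · intro q hq
          simp only [Set.mem_Icc] at hq
          by_cases hqa : q = a
          · refine ⟨d, by simp only [Set.mem_Icc]; omega, ?_⟩
            show (if d = d then a else (if τ' d < a then τ' d else τ' d + 1)) = q
            rw [if_pos (rfl : d = d)]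
            omega
          · by_cases hqlt : q < a
            · obtain ⟨k, hk, hτk⟩ := hbij'.surjOn
                (show q ∈ Set.Icc 1 (d-1) by simp only [Set.mem_Icc]; omega)
              simp only [Set.mem_Icc] at hk
              refine ⟨k, by simp only [Set.mem_Icc]; omega, ?_⟩
              have hkd : k ≠ d := by omega
              show (if k = d then a else (if τ' k < a then τ' k else τ' k + 1)) = q
              rw [if_neg hkd, if_pos (show τ' k < a by rw [hτk]; exact hqlt)]
              exact hτk
            · have hq1 : a < q := by omega
              obtain ⟨k, hk, hτk⟩ := hbij'.surjOn
                (show q - 1 ∈ Set.Icc 1 (d-1) by simp only [Set.mem_Icc]; omega)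
              simp only [Set.mem_Icc] at hk
              refine ⟨k, by simp only [Set.mem_Icc]; omega, ?_⟩
              have hkd : k ≠ d := by omega
              show (if k = d then a else (if τ' k < a then τ' k else τ' k + 1)) = q
              rw [if_neg hkd, if_neg (show ¬ τ' k < a by rw [hτk]; omega), hτk]
              omega
      · -- paths
        intro k hk
        simp only [Set.mem_Icc] at hk
        by_cases hkd : k = d
        · subst hkd
          show IsNEPathFrom (if k = k then colList (k : ℤ) y0 (e a).2 else _)
            ((k : ℤ), y0) (e (if k = k then a else _))
          rw [if_pos (rfl : k = k), if_pos (rfl : k = k)]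
          refine ⟨colList_head? _ _ _, ?_, colList_chain' _ _ _⟩
          rw [colList_getLast? _ _ _ (hh a (by simp only [Set.mem_Icc]; omega))]
          rw [show ((k : ℤ), (e a).2) = e a from Prod.ext_iff.mpr ⟨hea.symm, rfl⟩]
        · have hk' : k ∈ Set.Icc 1 (d-1) := by simp only [Set.mem_Icc]; omega
          obtain ⟨hhd', hlst', hch'⟩ := hpath' k hk'
          by_cases hτa : τ' k < a
          · show IsNEPathFrom (if k = d then _ else (if τ' k < a then P' k else _))
              ((k : ℤ), y0) (e (if k = d then a else (if τ' k < a then τ' k else τ' k + 1)))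
            rw [if_neg hkd, if_neg hkd, if_pos hτa, if_pos hτa]
            have heqe : e' (τ' k) = e (τ' k) := by
              rw [he']; simp only [if_pos hτa]
            refine ⟨hhd', ?_, hch'⟩
            rw [hlst', heqe]
          · show IsNEPathFrom (if k = d then _ else (if τ' k < a then P' k else
                P' k ++ colList (d : ℤ) (t (τ' k + 1)) (e (τ' k + 1)).2))
              ((k : ℤ), y0) (e (if k = d then a else (if τ' k < a then τ' k else τ' k + 1)))
            rw [if_neg hkd, if_neg hkd, if_neg hτa, if_neg hτa]
            have hτm := hτ'mem k hk'
            have hq1d : τ' k + 1 ≤ d := by omega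
            have haq1 : a < τ' k + 1 := by omega
            have htq : t (τ' k + 1) ≤ (e (τ' k + 1)).2 := htle _
            have hlst'' : (P' k).getLast? = some ((d : ℤ) - 1, t (τ' k + 1)) := by
              rw [hlst', he']; simp only [if_neg hτa]
            refine ⟨?_, ?_, ?_⟩
            · rw [List.head?_append, hhd']
              rfl
            · rw [List.getLast?_append, colList_getLast? _ _ _ htq]
              rw [show ((d : ℤ), (e (τ' k + 1)).2) = e (τ' k + 1) from
                Prod.ext_iff.mpr ⟨(hblock (τ' k + 1) (by omega) hq1d).symm, rfl⟩]
              rfl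
            · apply List.IsChain.append hch' (colList_chain' _ _ _)
              intro x hx z hz
              rw [hlst''] at hx
              rw [colList_head?] at hz
              simp only [Option.mem_def, Option.some.injEq] at hx hz
              subst hx; subst hz
              left
              rw [Prod.ext_iff]
              refine ⟨?_, rfl⟩
              show (d : ℤ) = (d : ℤ) - 1 + 1
              ring
      · -- disjointness
        have hchar : ∀ k, 1 ≤ k → k ≤ d - 1 → ∀ p,
            p ∈ (if k = d then colList (d : ℤ) y0 (e a).2 else
              (if τ' k < a then P' k else
                P' k ++ colList (d : ℤ) (t (τ' k + 1)) (e (τ' k + 1)).2)) →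
            (p ∈ P' k ∧ p.1 ≤ (d : ℤ) - 1) ∨
            (¬ τ' k < a ∧ p.1 = (d : ℤ) ∧ (e (τ' k)).2 < p.2 ∧ p.2 ≤ (e (τ' k + 1)).2) := by
          intro k h1 h2 p hp
          have hkd : k ≠ d := by omega
          rw [if_neg hkd] at hp
          have hk' : k ∈ Set.Icc 1 (d-1) := by simp only [Set.mem_Icc]; omega
          by_cases hτa : τ' k < a
          · rw [if_pos hτa] at hp
            exact Or.inl ⟨hp, hP'bound k hk' p hp⟩
          · rw [if_neg hτa] at hp
            rcases List.mem_append.mp hp with h | h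
            · exact Or.inl ⟨h, hP'bound k hk' p h⟩
            · have hτm := hτ'mem k hk'
              have h3 := hextmem (τ' k) (by omega) (by omega) p h
              exact Or.inr ⟨hτa, h3.1, h3.2.1, h3.2.2⟩
        intro k hk l hl hkl p hpk hpl
        simp only [Set.mem_Icc] at hk hl
        by_cases hkd : k = d <;> by_cases hld : l = d
        · omega
        · subst hkd
          beta_reduce at hpk
          rw [if_pos (rfl : k = k),
            colList_mem _ _ _ (hh a (by simp only [Set.mem_Icc]; omega))] at hpk
          rcases hchar l hl.1 (by omega) p hpl with ⟨_, hb⟩ | ⟨hτa, hx, hlo, hhi⟩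
          · omega
          · have hτm := hτ'mem l (by simp only [Set.mem_Icc]; omega)
            have h3 : (e a).2 ≤ (e (τ' l)).2 := (hmono a (τ' l) ha1.1 (by omega) (by omega)).2
            omega
        · subst hld
          beta_reduce at hpl
          rw [if_pos (rfl : l = l),
            colList_mem _ _ _ (hh a (by simp only [Set.mem_Icc]; omega))] at hpl
          rcases hchar k hk.1 (by omega) p hpk with ⟨_, hb⟩ | ⟨hτa, hx, hlo, hhi⟩
          · omega
          · have hτm := hτ'mem k (by simp only [Set.mem_Icc]; omega)
            have h3 : (e a).2 ≤ (e (τ' k)).2 := (hmono a (τ' k) ha1.1 (by omega) (by omega)).2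
            omega
        · have hk' : k ∈ Set.Icc 1 (d-1) := by simp only [Set.mem_Icc]; omega
          have hl' : l ∈ Set.Icc 1 (d-1) := by simp only [Set.mem_Icc]; omega
          have hτkm := hτ'mem k hk'
          have hτlm := hτ'mem l hl'
          rcases hchar k hk.1 (by omega) p hpk with ⟨hPk, hbk⟩ | ⟨hτak, hxk, hlok, hhik⟩ <;>
            rcases hchar l hl.1 (by omega) p hpl with ⟨hPl, hbl⟩ | ⟨hτal, hxl, hlol, hhil⟩
          · exact hdisj' k hk' l hl' hkl p hPk hPl
          · omega
          · omega
          · have hττ : τ' k ≠ τ' l := by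
              intro hcontra
              exact hkl (hbij'.injOn hk' hl' hcontra)
            rcases Ne.lt_or_gt hττ with h | h
            · have h3 : (e (τ' k + 1)).2 ≤ (e (τ' l)).2 :=
                (hmono (τ' k + 1) (τ' l) (by omega) (by omega) (by omega)).2
              omega
            · have h3 : (e (τ' l + 1)).2 ≤ (e (τ' k)).2 :=
                (hmono (τ' l + 1) (τ' k) (by omega) (by omega) (by omega)).2
              omega
      · -- covering
        intro p hp
        have h0 := hT p hp
        by_cases hpd : p.1 ≤ (d : ℤ) - 1
        · have hpT' : p ∈ T' := by
            rw [hT'def]; exact Finset.mem_filter.mpr ⟨hp, hpd⟩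
          obtain ⟨k, hk, hpk⟩ := hcov' p hpT'
          simp only [Set.mem_Icc] at hk
          refine ⟨k, by simp only [Set.mem_Icc]; omega, ?_⟩
          have hkd : k ≠ d := by omega
          show p ∈ (if k = d then colList (d : ℤ) y0 (e a).2 else
            (if τ' k < a then P' k else
              P' k ++ colList (d : ℤ) (t (τ' k + 1)) (e (τ' k + 1)).2))
          rw [if_neg hkd]
          by_cases hτa : τ' k < a
          · rw [if_pos hτa]; exact hpk
          · rw [if_neg hτa]; exact List.mem_append.mpr (Or.inl hpk)
        · have hpx : p.1 = (d : ℤ) := by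
            have := h0.2.2.1
            rw [hedd] at this
            omega
          by_cases hpa : p.2 ≤ (e a).2
          · refine ⟨d, by simp only [Set.mem_Icc]; omega, ?_⟩
            show p ∈ (if d = d then colList (d : ℤ) y0 (e a).2 else _)
            rw [if_pos (rfl : d = d), colList_mem _ _ _ (hh a (by simp only [Set.mem_Icc]; omega))]
            exact ⟨hpx, by omega, hpa⟩
          · push_neg at hpa
            have had : a < d := by
              by_contra hc
              have haeq : a = d := by omega
              rw [haeq] at hpa
              have := h0.2.2.2
              omega
            have hGne : ((Finset.Icc (a+1) d).filter (fun q => p.2 ≤ (e q).2)).Nonempty := by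
              refine ⟨d, ?_⟩
              simp only [Finset.mem_filter, Finset.mem_Icc]
              exact ⟨⟨by omega, le_refl d⟩, h0.2.2.2⟩
            set q := ((Finset.Icc (a+1) d).filter (fun q => p.2 ≤ (e q).2)).min' hGne with hqdef
            have hqmem : q ∈ (Finset.Icc (a+1) d).filter (fun q => p.2 ≤ (e q).2) :=
              Finset.min'_mem _ hGne
            have hqmin : ∀ r ∈ (Finset.Icc (a+1) d).filter (fun q => p.2 ≤ (e q).2), q ≤ r := by
              intro r hr
              rw [hqdef]
              exact Finset.min'_le _ r hr
            clear_value q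
            simp only [Finset.mem_filter, Finset.mem_Icc] at hqmem
            have hqlow : (e (q-1)).2 < p.2 := by
              by_cases hqa1 : q = a + 1
              · rw [hqa1]
                simp only [Nat.add_sub_cancel]
                exact hpa
              · by_contra hc
                push_neg at hc
                have : q ≤ q - 1 := hqmin (q-1) (by
                  simp only [Finset.mem_filter, Finset.mem_Icc]
                  exact ⟨⟨by omega, by omega⟩, hc⟩)
                omega
            have hpfs : p ∈ fs q := by
              rw [hfs]
              simp only [Finset.mem_filter]
              exact ⟨hp, hpx, hqlow, hqmem.2⟩
            have htp := htpt q p hpfs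
            obtain ⟨k, hk, hτk⟩ := hbij'.surjOn
              (show q - 1 ∈ Set.Icc 1 (d-1) by simp only [Set.mem_Icc]; omega)
            simp only [Set.mem_Icc] at hk
            refine ⟨k, by simp only [Set.mem_Icc]; omega, ?_⟩
            have hkd : k ≠ d := by omega
            show p ∈ (if k = d then colList (d : ℤ) y0 (e a).2 else
              (if τ' k < a then P' k else
                P' k ++ colList (d : ℤ) (t (τ' k + 1)) (e (τ' k + 1)).2))
            rw [if_neg hkd, if_neg (show ¬ τ' k < a by rw [hτk]; omega)]
            apply List.mem_append.mpr
            right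
            have hq1 : τ' k + 1 = q := by rw [hτk]; omega
            rw [hq1, colList_mem _ _ _ (htle q)]
            exact ⟨hpx, htp, hqmem.2⟩

/-- Core combinatorial engine: the light-and-shadow peeling procedure.
`y0` is the common `y`-coordinate of the starting points `(k, y0)`,
`k = 1, …, d`; `e q` (for `q = 1, …, d`) are the end points, forming a weakly
increasing sequence of distinct points with `q ≤ (e q).1 ≤ d`; `T` is the set
of points that must be covered, all lying in the strip `1 ≤ x ≤ (e d).1`,
`y0 < y ≤ (e d).2`, and satisfying the chain condition. -/
theorem lightShadowAux (d : ℕ) (y0 : ℤ) (e : ℕ → ℤ × ℤ)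
    (T : Finset (ℤ × ℤ)) (hd : 1 ≤ d)
    (hmono : ∀ q q', 1 ≤ q → q ≤ q' → q' ≤ d →
      (e q).1 ≤ (e q').1 ∧ (e q).2 ≤ (e q').2)
    (hinj : ∀ q ∈ Set.Icc 1 d, ∀ q' ∈ Set.Icc 1 d, e q = e q' → q = q')
    (hm : ∀ q ∈ Set.Icc 1 d, (q : ℤ) ≤ (e q).1)
    (hmd : ∀ q ∈ Set.Icc 1 d, (e q).1 ≤ (d : ℤ))
    (hh : ∀ q ∈ Set.Icc 1 d, y0 ≤ (e q).2)
    (hT : ∀ p ∈ T, 1 ≤ p.1 ∧ y0 < p.2 ∧ p.1 ≤ (e d).1 ∧ p.2 ≤ (e d).2)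
    (hchain : ∀ q ∈ Set.Icc 1 d, ∀ C : Finset (ℤ × ℤ),
      (∀ p ∈ C, p ∈ T) → IsPtChain C →
      (∀ p ∈ C, p.1 ≤ (e q).1 ∧ (e q).2 < p.2) →
      (C.card : ℤ) ≤ (e q).1 - q) :
    ∃ (τ : ℕ → ℕ) (P : ℕ → List (ℤ × ℤ)),
      Set.BijOn τ (Set.Icc 1 d) (Set.Icc 1 d) ∧
      (∀ k ∈ Set.Icc 1 d, IsNEPathFrom (P k) ((k : ℤ), y0) (e (τ k))) ∧
      (∀ k ∈ Set.Icc 1 d, ∀ l ∈ Set.Icc 1 d, k ≠ l → ∀ p ∈ P k, p ∉ P l) ∧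
      (∀ p ∈ T, ∃ k ∈ Set.Icc 1 d, p ∈ P k) := by
  exact lightShadowAuxN d d (le_refl d) y0 e T hd hmono hinj hm hmd hh hT hchain

section MainDerivation

variable {n d : ℕ} {i j : ℕ → ℕ}

/-- `j ℓ ≥ ℓ` for a strictly monotone sequence with values `≥ 1`. -/
lemma ge_of_strictMonoOn (hj : StrictMonoOn j (Set.Icc 1 d))
    (hj1 : ∀ ℓ ∈ Set.Icc 1 d, 1 ≤ j ℓ) :
    ∀ ℓ ∈ Set.Icc 1 d, ℓ ≤ j ℓ := by
  suffices h : ∀ ℓ, ℓ ≤ d → 1 ≤ ℓ → ℓ ≤ j ℓ by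
    exact fun ℓ hℓ => h ℓ hℓ.2 hℓ.1
  intro ℓ
  induction ℓ with
  | zero => intro _ h; omega
  | succ m ih =>
    intro hmd h1
    rcases Nat.eq_zero_or_pos m with rfl | hm
    · simpa using hj1 1 ⟨le_refl 1, by omega⟩
    · have hlt : j m < j (m+1) := hj ⟨hm, by omega⟩ ⟨by omega, hmd⟩ (by omega)
      have := ih (by omega) hm
      omega

end MainDerivation

/-- The light-and-shadow procedure with the sun in the south-east, applied to a
finite multiset `S` of points in the rectangle `1 ≤ x ≤ d`, `d+1 ≤ y ≤ i_d`
satisfying the chain condition, produces a family of `d` non-intersecting NE lattice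
paths `P_ℓ` from `A_ℓ = (d+1-ℓ,d)` to `E_{σ(ℓ)}` whose lattice points with
y-coordinate `> d` cover all points of `S`. -/
theorem light_and_shadow_produces_covering_family (n d : ℕ) (hd : 1 ≤ d) (hdn : d ≤ n)
    (i j : ℕ → ℕ)
    (hi : StrictMonoOn i (Set.Icc 1 d)) (hj : StrictMonoOn j (Set.Icc 1 d))
    (hiN : ∀ ℓ ∈ Set.Icc 1 d, i ℓ ∈ Set.Icc 1 n)
    (hjN : ∀ ℓ ∈ Set.Icc 1 d, j ℓ ∈ Set.Icc 1 n)
    (hji : ∀ ℓ ∈ Set.Icc 1 d, j ℓ ≤ i ℓ)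
    (κ : ℕ → ℕ)
    (hκ : ∀ q, κ q = ((Finset.Icc 1 d).filter (fun ℓ => i q < j ℓ)).card)
    (A E : ℕ → ℤ × ℤ)
    (hA : ∀ ℓ, A ℓ = ((d : ℤ) + 1 - ℓ, (d : ℤ)))
    (hE : ∀ q, E q = ((d : ℤ) - κ q, (κ q : ℤ) + i q))
    (S : Multiset (ℤ × ℤ))
    (hSrect : ∀ p ∈ S, 1 ≤ p.1 ∧ p.1 ≤ (d : ℤ) ∧ (d : ℤ) + 1 ≤ p.2 ∧ p.2 ≤ (i d : ℤ))
    (hchain : ∀ q ∈ Set.Icc 1 d, ∀ C : Finset (ℤ × ℤ),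
      (∀ p ∈ C, p ∈ S) → IsPtChain C →
      (∀ p ∈ C, p.1 ≤ (E q).1 ∧ (E q).2 < p.2) →
      (C.card : ℤ) ≤ (d : ℤ) - κ q - q) :
    ∃ (P : ℕ → List (ℤ × ℤ)) (σ : ℕ → ℕ),
      Set.BijOn σ (Set.Icc 1 d) (Set.Icc 1 d) ∧
      (∀ ℓ ∈ Set.Icc 1 d, IsNEPathFrom (P ℓ) (A ℓ) (E (σ ℓ))) ∧
      (∀ k ∈ Set.Icc 1 d, ∀ l ∈ Set.Icc 1 d, k ≠ l → ∀ p ∈ P k, p ∉ P l) ∧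
      ∀ p ∈ S, ∃ ℓ ∈ Set.Icc 1 d, p ∈ P ℓ := by
  -- Basic facts about κ.
  have hκle : ∀ q ∈ Set.Icc 1 d, κ q ≤ d - q := by
    intro q hq
    rw [hκ]
    have hsub : (Finset.Icc 1 d).filter (fun ℓ => i q < j ℓ) ⊆ Finset.Icc (q+1) d := by
      intro ℓ hℓ
      simp only [Finset.mem_filter, Finset.mem_Icc] at hℓ ⊢
      obtain ⟨⟨hℓ1, hℓ2⟩, hℓ3⟩ := hℓ
      refine ⟨?_, hℓ2⟩
      by_contra hc
      have hℓq : ℓ ≤ q := by omega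
      have h1 : i ℓ ≤ i q := by
        rcases lt_or_eq_of_le hℓq with h | h
        · exact le_of_lt (hi ⟨hℓ1, by omega⟩ hq h)
        · rw [h]
      have := hji ℓ ⟨hℓ1, hℓ2⟩
      omega
    calc ((Finset.Icc 1 d).filter (fun ℓ => i q < j ℓ)).card
        ≤ (Finset.Icc (q+1) d).card := Finset.card_le_card hsub
      _ = d - q := by rw [Nat.card_Icc]; omega
  have hκmono : ∀ q q', 1 ≤ q → q ≤ q' → q' ≤ d → κ q' ≤ κ q := by
    intro q q' h1 h2 h3
    rw [hκ, hκ]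
    apply Finset.card_le_card
    intro ℓ hℓ
    simp only [Finset.mem_filter, Finset.mem_Icc] at hℓ ⊢
    refine ⟨hℓ.1, lt_of_le_of_lt ?_ hℓ.2⟩
    rcases lt_or_eq_of_le h2 with h | h
    · exact le_of_lt (hi ⟨h1, by omega⟩ ⟨by omega, h3⟩ h)
    · rw [h]
  have hhmono : ∀ q q', 1 ≤ q → q ≤ q' → q' ≤ d → κ q + i q ≤ κ q' + i q' := by
    intro q q' h1 h2 h3
    have hiqq : i q ≤ i q' := by
      rcases lt_or_eq_of_le h2 with h | h
      · exact le_of_lt (hi ⟨h1, by omega⟩ ⟨by omega, h3⟩ h)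
      · rw [h]
    -- κ q - κ q' ≤ i q' - i q
    have hdiff : κ q ≤ κ q' + (i q' - i q) := by
      rw [hκ, hκ]
      have hsplit : (Finset.Icc 1 d).filter (fun ℓ => i q < j ℓ) ⊆
          ((Finset.Icc 1 d).filter (fun ℓ => i q' < j ℓ)) ∪
          ((Finset.Icc 1 d).filter (fun ℓ => i q < j ℓ ∧ j ℓ ≤ i q')) := by
        intro ℓ hℓ
        simp only [Finset.mem_filter, Finset.mem_union] at hℓ ⊢
        by_cases hc : i q' < j ℓ
        · exact Or.inl ⟨hℓ.1, hc⟩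
        · exact Or.inr ⟨hℓ.1, hℓ.2, by omega⟩
      have hcard2 : ((Finset.Icc 1 d).filter (fun ℓ => i q < j ℓ ∧ j ℓ ≤ i q')).card
          ≤ i q' - i q := by
        have hinj2 : Set.InjOn j ((Finset.Icc 1 d).filter
            (fun ℓ => i q < j ℓ ∧ j ℓ ≤ i q') : Finset ℕ) := by
          intro a ha b hb hab
          simp only [Finset.coe_filter, Set.mem_setOf_eq, Finset.mem_Icc] at ha hb
          exact hj.injOn ⟨ha.1.1, ha.1.2⟩ ⟨hb.1.1, hb.1.2⟩ hab
        have himg : ∀ ℓ ∈ (Finset.Icc 1 d).filter (fun ℓ => i q < j ℓ ∧ j ℓ ≤ i q'),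
            j ℓ ∈ Finset.Ioc (i q) (i q') := by
          intro ℓ hℓ
          simp only [Finset.mem_filter] at hℓ
          simp only [Finset.mem_Ioc]
          exact hℓ.2
        calc ((Finset.Icc 1 d).filter (fun ℓ => i q < j ℓ ∧ j ℓ ≤ i q')).card
            = (((Finset.Icc 1 d).filter (fun ℓ => i q < j ℓ ∧ j ℓ ≤ i q')).image j).card := by
              rw [Finset.card_image_of_injOn hinj2]
          _ ≤ (Finset.Ioc (i q) (i q')).card := by
              apply Finset.card_le_card
              intro y hy
              simp only [Finset.mem_image] at hy
              obtain ⟨ℓ, hℓ, rfl⟩ := hy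
              exact himg ℓ hℓ
          _ = i q' - i q := by rw [Nat.card_Ioc]
      calc ((Finset.Icc 1 d).filter (fun ℓ => i q < j ℓ)).card
          ≤ (((Finset.Icc 1 d).filter (fun ℓ => i q' < j ℓ)) ∪
            ((Finset.Icc 1 d).filter (fun ℓ => i q < j ℓ ∧ j ℓ ≤ i q'))).card :=
            Finset.card_le_card hsplit
        _ ≤ ((Finset.Icc 1 d).filter (fun ℓ => i q' < j ℓ)).card +
            ((Finset.Icc 1 d).filter (fun ℓ => i q < j ℓ ∧ j ℓ ≤ i q')).card :=
            Finset.card_union_le _ _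
        _ ≤ _ := by omega
    omega
  have hid : ∀ q ∈ Set.Icc 1 d, d - κ q ≤ i q := by
    -- i q ≥ d - κ q
    intro q hq
    by_contra hc
    push_neg at hc
    -- then the set {ℓ : j ℓ ≤ i q} has d - κ q > i q elements, but j is strictly
    -- monotone with j ℓ ≥ ℓ, so its elements map injectively into [1, i q].
    have hF : ((Finset.Icc 1 d).filter (fun ℓ => ¬ (i q < j ℓ))).card = d - κ q := by
      have htot := Finset.card_filter_add_card_filter_not
        (s := Finset.Icc 1 d) (p := fun ℓ => i q < j ℓ)
      have hcard : (Finset.Icc 1 d).card = d := by rw [Nat.card_Icc]; omega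
      rw [hκ]
      omega
    have hj1 : ∀ ℓ ∈ Set.Icc 1 d, 1 ≤ j ℓ := fun ℓ hℓ => (hjN ℓ hℓ).1
    have hjge := ge_of_strictMonoOn hj hj1
    have hsub : ((Finset.Icc 1 d).filter (fun ℓ => ¬ (i q < j ℓ))) ⊆
        Finset.Icc 1 (i q) := by
      intro ℓ hℓ
      simp only [Finset.mem_filter, Finset.mem_Icc, not_lt] at hℓ ⊢
      have := hjge ℓ ⟨hℓ.1.1, hℓ.1.2⟩
      omega
    have := Finset.card_le_card hsub
    rw [hF, Nat.card_Icc] at this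
    omega
  have hκd0 : κ d = 0 := by
    rw [hκ]
    rw [Finset.card_eq_zero, Finset.filter_eq_empty_iff]
    intro ℓ hℓ
    simp only [Finset.mem_Icc] at hℓ
    have h1 : i ℓ ≤ i d := by
      rcases lt_or_eq_of_le hℓ.2 with h | h
      · exact le_of_lt (hi ⟨hℓ.1, by omega⟩ ⟨hd, le_refl d⟩ h)
      · rw [h]
    have := hji ℓ ⟨hℓ.1, hℓ.2⟩
    omega
  -- Apply the combinatorial engine.
  obtain ⟨τ, Paux, hbij, hpath, hdisj, hcov⟩ :=
    lightShadowAux d ((d : ℤ)) E S.toFinset hd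
      (by -- hmono
        intro q q' h1 h2 h3
        rw [hE, hE]
        have hκm := hκmono q q' h1 h2 h3
        have hhm := hhmono q q' h1 h2 h3
        constructor <;> simp <;> omega)
      (by -- hinj
        intro q hq q' hq' hEq
        rw [hE, hE, Prod.ext_iff] at hEq
        simp only at hEq
        have hκeq : κ q = κ q' := by omega
        have hieq : i q = i q' := by omega
        exact hi.injOn hq hq' hieq)
      (by -- hm
        intro q hq
        rw [hE]
        have := hκle q hq
        simp only [Set.mem_Icc] at hq
        simp
        omega)
      (by -- hmd
        intro q hq
        rw [hE]
        show (d : ℤ) - κ q ≤ (d : ℤ)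
        omega)
      (by -- hh
        intro q hq
        rw [hE]
        have := hid q hq
        simp
        omega)
      (by -- hT
        intro p hp
        rw [Multiset.mem_toFinset] at hp
        have := hSrect p hp
        rw [hE]
        simp only [hκd0, Nat.cast_zero, sub_zero, zero_add]
        exact ⟨this.1, by omega, this.2.1, this.2.2.2⟩)
      (by -- hchain
        intro q hq C hCT hCch hCr
        have hb := hchain q hq C (fun p hp => Multiset.mem_toFinset.mp (hCT p hp)) hCch hCr
        rw [hE]
        simp only
        omega)
  -- Transfer along the reversal `ℓ ↦ d + 1 - ℓ`.
  have hρ : Set.BijOn (fun ℓ => d + 1 - ℓ) (Set.Icc 1 d) (Set.Icc 1 d) := by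
    refine ⟨?_, ?_, ?_⟩
    · intro x hx
      simp only [Set.mem_Icc] at hx ⊢
      omega
    · intro x hx y hy hxy
      simp only [Set.mem_Icc] at hx hy
      simp only at hxy
      omega
    · intro y hy
      simp only [Set.mem_Icc] at hy
      exact ⟨d + 1 - y, by simp only [Set.mem_Icc]; omega, by simp only; omega⟩
  refine ⟨fun ℓ => Paux (d + 1 - ℓ), fun ℓ => τ (d + 1 - ℓ), ?_, ?_, ?_, ?_⟩
  · exact Set.BijOn.comp hbij hρ
  · intro ℓ hℓ
    simp only [Set.mem_Icc] at hℓ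
    have hmem : d + 1 - ℓ ∈ Set.Icc 1 d := by simp only [Set.mem_Icc]; omega
    have hAℓ : A ℓ = (((d + 1 - ℓ : ℕ) : ℤ), (d : ℤ)) := by
      rw [hA, Prod.ext_iff]
      constructor
      · simp only; omega
      · rfl
    rw [hAℓ]
    exact hpath (d + 1 - ℓ) hmem
  · intro k hk l hl hkl p hp
    simp only [Set.mem_Icc] at hk hl
    exact hdisj (d + 1 - k) (by simp only [Set.mem_Icc]; omega)
      (d + 1 - l) (by simp only [Set.mem_Icc]; omega) (by omega) p hp
  · intro p hp
    obtain ⟨k, hk, hpk⟩ := hcov p (Multiset.mem_toFinset.mpr hp)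
    simp only [Set.mem_Icc] at hk
    refine ⟨d + 1 - k, by simp only [Set.mem_Icc]; omega, ?_⟩
    show p ∈ Paux (d + 1 - (d + 1 - k))
    have : d + 1 - (d + 1 - k) = k := by omega
    rw [this]
    exact hpk
end
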